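/- Let G be a connected cubic graph with a vertex partition {A, J} such that A induces a tree and the induced subgraph G[J] has exactly one edge, which is not a loop. Then G has a spanning tree whose cotree has exactly one component with an odd number of edges, and moreover this odd component has at least three edges. -/

import Mathlib

open SimpleGraph Finset

/-- The set of edges of `H` lying in the connected component `c` of `H`. -/
def cotreeCompEdges {V : Type*} (H : SimpleGraph V) (c : H.ConnectedComponent) :
    Set (Sym2 V) :=
  {e | e ∈ H.edgeSet ∧ ∀ v ∈ e, H.connectedComponentMk v = c}

/-!
Attach every vertex `w ∈ J` as a leaf to the tree `G[A]` through a neighbour `f w ∈ A`; such a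
neighbour exists because `w` has three neighbours and at most one of them lies in `J`. In the
cotree every edge meets `J` and every vertex of `J` has degree two, so counting incidences between
`J` and the edges of a component `c` gives `|E(c)| + |E(c) ∩ J⁽²⁾| = 2 |J ∩ c|`. Since `uv` is
the only edge inside `J`, the component of `u` has `2 |J ∩ c| - 1 ≥ 3` edges and every other
component has an even number of edges.
-/

theorem Sym2.card_filter_mem_of_not_isDiag {V : Type*} [DecidableEq V] (K : Finset V)
    {e : Sym2 V} (he : ¬e.IsDiag) (hK : ∃ x ∈ e, x ∈ K) :
    #{x ∈ K | x ∈ e} = 1 + if e ∈ K.sym2 then 1 else 0 := by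
  induction e using Sym2.ind with
  | _ a b =>
    have hab : a ≠ b := by simpa using he
    have hfilter : {x ∈ K | x ∈ s(a, b)} = {x ∈ ({a, b} : Finset V) | x ∈ K} := by
      ext x
      simp [and_comm]
    rw [hfilter, filter_insert, filter_singleton]
    simp only [Sym2.mem_iff, exists_eq_or_imp, exists_eq_left] at hK
    by_cases ha : a ∈ K <;> by_cases hb : b ∈ K <;> simp_all

theorem Finset.sum_card_filter_mem_sym2 {V : Type*} [DecidableEq V] (E : Finset (Sym2 V))
    (K : Finset V) (hE : ∀ e ∈ E, ¬e.IsDiag ∧ ∃ x ∈ e, x ∈ K) :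
    ∑ w ∈ K, #{e ∈ E | w ∈ e} = #E + #(E ∩ K.sym2) := by
  have hswap :=
    sum_card_bipartiteAbove_eq_sum_card_bipartiteBelow (s := K) (t := E) (r := (· ∈ ·))
  simp only [bipartiteAbove, bipartiteBelow] at hswap
  rw [hswap, sum_congr rfl fun e he => Sym2.card_filter_mem_of_not_isDiag K (hE e he).1 (hE e he).2,
    sum_add_distrib, sum_boole]
  simp [filter_mem_eq_inter]

namespace SimpleGraph

variable {V : Type*}

theorem isTree_of_isTree_induce {T : SimpleGraph V} {s : Set V} (hs : (T.induce s).IsTree)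
    (hleaf : ∀ w ∉ s, ∃ a ∈ s, T.neighborSet w = {a}) : T.IsTree := by
  have hreach : ∀ x, ∃ a ∈ s, T.Reachable x a := by
    intro x
    by_cases hx : x ∈ s
    · exact ⟨x, hx, .rfl⟩
    · obtain ⟨a, ha, hnbr⟩ := hleaf x hx
      exact ⟨a, ha, Adj.reachable (show a ∈ T.neighborSet x by simp [hnbr])⟩
  have hreach_s : ∀ a ∈ s, ∀ b ∈ s, T.Reachable a b := fun a ha b hb =>
    (hs.connected.preconnected ⟨a, ha⟩ ⟨b, hb⟩).map (Embedding.induce s).toHom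
  refine ⟨(connected_iff _).2 ⟨fun x y => ?_, ?_⟩, fun x p hp => ?_⟩
  · obtain ⟨a, ha, hxa⟩ := hreach x
    obtain ⟨b, hb, hyb⟩ := hreach y
    exact hxa.trans ((hreach_s a ha b hb).trans hyb.symm)
  · obtain ⟨⟨a, -⟩⟩ := hs.connected.nonempty
    exact ⟨a⟩
  · by_cases hsupp : ∀ y ∈ p.support, y ∈ s
    · refine hs.isAcyclic (p.induce s hsupp) ?_
      rwa [← Walk.isCycle_map_iff_of_injective (f := (Embedding.induce (G := T) s).toHom)
        Subtype.val_injective, Walk.map_induce]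
    · -- a leaf cannot lie on a cycle: rotated to start there, the cycle leaves and returns
      -- through two distinct neighbours
      classical
      push Not at hsupp
      obtain ⟨w, hwp, hws⟩ := hsupp
      obtain ⟨a, -, hnbr⟩ := hleaf w hws
      have hq := hp.rotate hwp
      have h₁ : (p.rotate w hwp).snd ∈ T.neighborSet w := Walk.adj_snd hq.not_nil
      have h₂ : (p.rotate w hwp).penultimate ∈ T.neighborSet w :=
        (Walk.adj_penultimate hq.not_nil).symm
      rw [hnbr] at h₁ h₂
      exact hq.snd_ne_penultimate (h₁.trans h₂.symm)

theorem exists_adj_notMem_of_ncard_edges_le_one [Fintype V] {G : SimpleGraph V}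
    [DecidableRel G.Adj] {K : Set V}
    (hK : {e | e ∈ G.edgeSet ∧ ∀ x ∈ e, x ∈ K}.ncard ≤ 1)
    {w : V} (hw : w ∈ K) (hdeg : 2 ≤ G.degree w) : ∃ x, G.Adj w x ∧ x ∉ K := by
  by_contra! hnbr
  have hinj : Set.InjOn (fun x => s(w, x)) (G.neighborFinset w : Set V) :=
    fun x _ y _ h => Sym2.congr_right.1 h
  have hmaps : Set.MapsTo (fun x => s(w, x)) (G.neighborFinset w : Set V)
      {e | e ∈ G.edgeSet ∧ ∀ x ∈ e, x ∈ K} := by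
    intro x hx
    have hx : G.Adj w x := by simpa using hx
    refine ⟨hx, fun y hy => ?_⟩
    rcases Sym2.mem_iff.1 hy with rfl | rfl
    exacts [hw, hnbr _ hx]
  have hcard := Set.ncard_le_ncard_of_injOn _ hmaps hinj
  rw [Set.ncard_coe_finset, card_neighborFinset_eq_degree] at hcard
  omega

section attachLeaves

variable (G : SimpleGraph V) (s : Set V) (f : V → V)

def attachLeaves : SimpleGraph V where
  Adj x y := G.Adj x y ∧ (x ∈ s ∧ y ∈ s ∨ x ∉ s ∧ y = f x ∨ y ∉ s ∧ x = f y)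
  symm := ⟨fun _ _ h => ⟨h.1.symm, by tauto⟩⟩
  loopless := ⟨fun x h => G.loopless.irrefl x h.1⟩

variable {G s f}

theorem attachLeaves_le : attachLeaves G s f ≤ G := fun _ _ h => h.1

theorem induce_attachLeaves : (attachLeaves G s f).induce s = G.induce s := by
  ext ⟨x, hx⟩ ⟨y, hy⟩
  simp [attachLeaves, hx, hy]

theorem sdiff_attachLeaves_adj {x y : V} (h : (G \ attachLeaves G s f).Adj x y) :
    x ∉ s ∨ y ∉ s := by
  by_contra! hxy
  exact h.2 ⟨h.1, Or.inl hxy⟩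

theorem attachLeaves_adj_of_notMem (hf : ∀ w ∉ s, f w ∈ s ∧ G.Adj w (f w)) {w : V}
    (hw : w ∉ s) (x : V) : (attachLeaves G s f).Adj w x ↔ x = f w := by
  constructor
  · rintro ⟨-, ⟨hws, -⟩ | ⟨-, rfl⟩ | ⟨hxs, rfl⟩⟩
    exacts [absurd hws hw, rfl, absurd (hf x hxs).1 hw]
  · rintro rfl
    exact ⟨(hf w hw).2, Or.inr (Or.inl ⟨hw, rfl⟩)⟩

theorem isTree_attachLeaves (hf : ∀ w ∉ s, f w ∈ s ∧ G.Adj w (f w))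
    (h : (G.induce s).IsTree) : (attachLeaves G s f).IsTree := by
  refine isTree_of_isTree_induce (by rwa [induce_attachLeaves])
    fun w hw => ⟨f w, (hf w hw).1, ?_⟩
  ext x
  exact attachLeaves_adj_of_notMem hf hw x

theorem mem_edgeSet_sdiff_attachLeaves (hf : ∀ w ∉ s, f w ∈ s ∧ G.Adj w (f w)) {e : Sym2 V}
    (he : ∀ x ∈ e, x ∉ s) : e ∈ (G \ attachLeaves G s f).edgeSet ↔ e ∈ G.edgeSet := by
  induction e using Sym2.ind with
  | _ x y =>
    have hx := he x (Sym2.mem_mk_left x y)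
    rw [mem_edgeSet, mem_edgeSet, sdiff_adj, attachLeaves_adj_of_notMem hf hx]
    exact and_iff_left fun h => he y (Sym2.mem_mk_right x y) (h ▸ (hf x hx).1)

theorem degree_sdiff_attachLeaves [Fintype V] [DecidableEq V] [DecidableRel G.Adj]
    [DecidableRel (G \ attachLeaves G s f).Adj] (hf : ∀ w ∉ s, f w ∈ s ∧ G.Adj w (f w))
    {w : V} (hw : w ∉ s) : (G \ attachLeaves G s f).degree w + 1 = G.degree w := by
  have hnbr : (G \ attachLeaves G s f).neighborFinset w = (G.neighborFinset w).erase (f w) := by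
    ext x
    simp [attachLeaves_adj_of_notMem hf hw, and_comm]
  have hpos : 0 < G.degree w := (G.degree_pos_iff_exists_adj w).2 ⟨_, (hf w hw).2⟩
  rw [← card_neighborFinset_eq_degree, hnbr, card_erase_of_mem (by simpa using (hf w hw).2),
    card_neighborFinset_eq_degree, Nat.sub_add_cancel hpos]

end attachLeaves

theorem adj_and_mem_of_edgeFinset_inter_sym2_eq [DecidableEq V] {H : SimpleGraph V}
    [Fintype H.edgeSet] {K : Finset V} {u v : V}
    (huv : H.edgeFinset ∩ K.sym2 = {s(u, v)}) : H.Adj u v ∧ u ∈ K ∧ v ∈ K := by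
  have huv_mem := mem_inter.1 (huv ▸ mem_singleton_self s(u, v))
  rwa [mem_edgeFinset, mem_edgeSet, mk_mem_sym2_iff] at huv_mem

section cotreeComponents

open scoped Classical

variable [Fintype V] [DecidableEq V] {H : SimpleGraph V} [Fintype H.edgeSet]

variable (H) in
noncomputable def compEdgeFinset (c : H.ConnectedComponent) : Finset (Sym2 V) :=
  {e ∈ H.edgeFinset | ∀ x ∈ e, H.connectedComponentMk x = c}

theorem ncard_cotreeCompEdges (c : H.ConnectedComponent) :
    (cotreeCompEdges H c).ncard = #(H.compEdgeFinset c) := by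
  rw [← Set.ncard_coe_finset]
  congr 1
  ext e
  simp [cotreeCompEdges, compEdgeFinset]

theorem filter_mem_compEdgeFinset [DecidableRel H.Adj]
    (c : H.ConnectedComponent) (w : V) :
    {e ∈ H.compEdgeFinset c | w ∈ e} =
      if H.connectedComponentMk w = c then H.incidenceFinset w else ∅ := by
  ext e
  induction e using Sym2.ind with
  | _ a b =>
    have hab : H.Adj a b → H.connectedComponentMk a = H.connectedComponentMk b :=
      ConnectedComponent.connectedComponentMk_eq_of_adj
    split_ifs with hw
    · simp only [compEdgeFinset, mem_filter, mem_edgeFinset, mem_edgeSet, Sym2.mem_iff,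
        mem_incidenceFinset, incidenceSet, Set.mem_ofPred_eq]
      grind
    · simp only [compEdgeFinset, mem_filter, mem_edgeFinset, mem_edgeSet, Sym2.mem_iff,
        notMem_empty, iff_false]
      grind

theorem card_compEdgeFinset_add_card_inter_sym2 [DecidableRel H.Adj] {K : Finset V}
    (hK : ∀ x y, H.Adj x y → x ∈ K ∨ y ∈ K) (c : H.ConnectedComponent) :
    #(H.compEdgeFinset c) + #(H.compEdgeFinset c ∩ K.sym2) =
      ∑ w ∈ K with H.connectedComponentMk w = c, H.degree w := by
  have hE : ∀ e ∈ H.compEdgeFinset c, ¬e.IsDiag ∧ ∃ x ∈ e, x ∈ K := by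
    intro e he
    induction e using Sym2.ind with
    | _ a b =>
      have hab : H.Adj a b := by simpa using filter_subset _ _ he
      exact ⟨by simpa using hab.ne, by simpa using hK a b hab⟩
  rw [← sum_card_filter_mem_sym2 _ _ hE, sum_filter]
  refine sum_congr rfl fun w _ => ?_
  rw [filter_mem_compEdgeFinset, apply_ite card, card_incidenceFinset_eq_degree, card_empty]

variable [DecidableRel H.Adj] {K : Finset V} {u v : V}

theorem card_compEdgeFinset_add_ite (hK : ∀ x y, H.Adj x y → x ∈ K ∨ y ∈ K)
    (hdeg : ∀ w ∈ K, H.degree w = 2) (huv : H.edgeFinset ∩ K.sym2 = {s(u, v)})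
    (c : H.ConnectedComponent) :
    #(H.compEdgeFinset c) + (if c = H.connectedComponentMk u then 1 else 0) =
      2 * #{w ∈ K | H.connectedComponentMk w = c} := by
  have hadj := (adj_and_mem_of_edgeFinset_inter_sym2_eq huv).1
  have hcomp :
      (∀ x ∈ s(u, v), H.connectedComponentMk x = c) ↔ c = H.connectedComponentMk u := by
    simp only [Sym2.mem_iff, forall_eq_or_imp, forall_eq,
      ← ConnectedComponent.connectedComponentMk_eq_of_adj hadj, and_self]
    exact eq_comm
  have hinner : H.compEdgeFinset c ∩ K.sym2 =
      if c = H.connectedComponentMk u then {s(u, v)} else ∅ := by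
    simp only [compEdgeFinset, filter_inter, huv, filter_singleton, hcomp]
  calc #(H.compEdgeFinset c) + (if c = H.connectedComponentMk u then 1 else 0)
      = #(H.compEdgeFinset c) + #(H.compEdgeFinset c ∩ K.sym2) := by
        rw [hinner, apply_ite card, card_singleton, card_empty]
    _ = ∑ w ∈ K with H.connectedComponentMk w = c, H.degree w :=
        card_compEdgeFinset_add_card_inter_sym2 hK c
    _ = 2 * #{w ∈ K | H.connectedComponentMk w = c} := by
        rw [sum_congr rfl fun w hw => hdeg w (mem_filter.1 hw).1, sum_const, smul_eq_mul,
          mul_comm]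

theorem odd_ncard_cotreeCompEdges_iff (hK : ∀ x y, H.Adj x y → x ∈ K ∨ y ∈ K)
    (hdeg : ∀ w ∈ K, H.degree w = 2) (huv : H.edgeFinset ∩ K.sym2 = {s(u, v)})
    (c : H.ConnectedComponent) :
    Odd (cotreeCompEdges H c).ncard ↔ c = H.connectedComponentMk u := by
  have hcount := card_compEdgeFinset_add_ite hK hdeg huv c
  rw [ncard_cotreeCompEdges, Nat.odd_iff]
  by_cases hc : c = H.connectedComponentMk u <;>
    simp only [hc, if_true, if_false, iff_true, iff_false] at hcount ⊢ <;> omega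

theorem three_le_ncard_cotreeCompEdges (hK : ∀ x y, H.Adj x y → x ∈ K ∨ y ∈ K)
    (hdeg : ∀ w ∈ K, H.degree w = 2) (huv : H.edgeFinset ∩ K.sym2 = {s(u, v)}) :
    3 ≤ (cotreeCompEdges H (H.connectedComponentMk u)).ncard := by
  have hcount := card_compEdgeFinset_add_ite hK hdeg huv (H.connectedComponentMk u)
  obtain ⟨hadj, hu, hv⟩ := adj_and_mem_of_edgeFinset_inter_sym2_eq huv
  have htwo : 2 ≤ #{w ∈ K | H.connectedComponentMk w = H.connectedComponentMk u} := by
    refine le_of_eq_of_le (card_pair hadj.ne).symm (card_le_card fun w hw => ?_)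
    rcases mem_insert.1 hw with rfl | hw
    · simp [hu]
    · simp [mem_singleton.1 hw, hv, ConnectedComponent.connectedComponentMk_eq_of_adj hadj]
  rw [ncard_cotreeCompEdges]
  simp only [if_true] at hcount
  omega

end cotreeComponents

end SimpleGraph

theorem stmt7_general {V : Type*} [Fintype V] [DecidableEq V] (G : SimpleGraph V)
    [DecidableRel G.Adj] (hcubic : ∀ v, G.degree v = 3)
    (A J : Finset V) (hdisj : Disjoint A J) (hcover : A ∪ J = Finset.univ)
    (htree : (G.induce (↑A : Set V)).IsTree)
    (hnear : {e | e ∈ G.edgeSet ∧ ∀ v ∈ e, v ∈ (↑J : Set V)}.ncard = 1) :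
    ∃ T : SimpleGraph V, T ≤ G ∧ T.IsTree ∧
      ∃ c : (G \ T).ConnectedComponent,
        Odd ((cotreeCompEdges (G \ T) c).ncard) ∧
        3 ≤ (cotreeCompEdges (G \ T) c).ncard ∧
        ∀ c' : (G \ T).ConnectedComponent,
          Odd ((cotreeCompEdges (G \ T) c').ncard) → c' = c := by
  classical
  have hJ : ∀ x, x ∈ J ↔ x ∉ A := fun x =>
    ⟨fun hx hA => disjoint_left.1 hdisj hA hx,
      fun hA => (mem_union.1 (hcover ▸ mem_univ x)).resolve_left hA⟩
  have hleaf : ∀ w ∉ (A : Set V), ∃ a, a ∈ (A : Set V) ∧ G.Adj w a := fun w hw => by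
    obtain ⟨a, hwa, ha⟩ :=
      exists_adj_notMem_of_ncard_edges_le_one hnear.le ((hJ w).2 hw) (by simp [hcubic])
    exact ⟨a, by simpa [hJ] using ha, hwa⟩
  choose! f hf using hleaf
  have hK : ∀ x y, (G \ attachLeaves G A f).Adj x y → x ∈ J ∨ y ∈ J :=
    fun x y h => by simpa only [hJ, mem_coe] using sdiff_attachLeaves_adj h
  have hdeg : ∀ w ∈ J, (G \ attachLeaves G A f).degree w = 2 := fun w hw => by
    have hsucc := degree_sdiff_attachLeaves hf ((hJ w).1 hw)
    rw [hcubic] at hsucc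
    omega
  obtain ⟨e₀, he₀⟩ := Set.ncard_eq_one.1 hnear
  obtain ⟨u, v, rfl⟩ : ∃ u v, e₀ = s(u, v) := Sym2.ind (fun u v => ⟨u, v, rfl⟩) e₀
  have huv : (G \ attachLeaves G A f).edgeFinset ∩ J.sym2 = {s(u, v)} := by
    ext e
    rw [mem_inter, mem_sym2_iff, mem_edgeFinset, mem_singleton, ← Set.mem_singleton_iff,
      ← he₀]
    exact and_congr_left fun he =>
      mem_edgeSet_sdiff_attachLeaves hf fun x hx => (hJ x).1 (he x hx)
  exact ⟨_, attachLeaves_le, isTree_attachLeaves hf htree, _,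
    (odd_ncard_cotreeCompEdges_iff hK hdeg huv _).2 rfl, three_le_ncard_cotreeCompEdges hK hdeg huv,
    fun c hc => (odd_ncard_cotreeCompEdges_iff hK hdeg huv c).1 hc⟩

/-- If a connected cubic graph has a vertex partition `{A, J}` with `A` inducing a tree
and `G[J]` having exactly one edge, then `G` has a spanning tree whose cotree has exactly
one odd component, and this odd component has at least three edges. -/
theorem stmt7 {V : Type*} [Fintype V] [DecidableEq V] (G : SimpleGraph V)
    [DecidableRel G.Adj] (hconn : G.Connected) (hcubic : ∀ v, G.degree v = 3)
    (A J : Finset V) (hdisj : Disjoint A J) (hcover : A ∪ J = Finset.univ)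
    (htree : (G.induce (↑A : Set V)).IsTree)
    (hnear : {e | e ∈ G.edgeSet ∧ ∀ v ∈ e, v ∈ (↑J : Set V)}.ncard = 1) :
    ∃ T : SimpleGraph V, T ≤ G ∧ T.IsTree ∧
      ∃ c : (G \ T).ConnectedComponent,
        Odd ((cotreeCompEdges (G \ T) c).ncard) ∧
        3 ≤ (cotreeCompEdges (G \ T) c).ncard ∧
        ∀ c' : (G \ T).ConnectedComponent,
          Odd ((cotreeCompEdges (G \ T) c').ncard) → c' = c :=
  stmt7_general G hcubic A J hdisj hcover htree hnear
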